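/- arXiv:1404.5244 — 8 statements merged into one kernel-verified Lean document; each statement's English description precedes it below -/
import Mathlib

section
/- Let w be a nonempty palindrome and let p be a period of w with 1 ≤ p ≤ |w|. Then there exist palindromes u and v such that v ≠ ε, |u| + |v| = p, and w = (uv)^k u for some integer k ≥ 1. -/
/-!
Write `|w| = k p + r` with `0 ≤ r < p`. Periodicity alone gives `w = x^k u`, where `x` is the
prefix of length `p` and `u` its prefix of length `r`; splitting `x = u v` yields
`w = (u v)^k u = u (v u)^k`. Reversing the palindrome `w` gives `u^R (v^R u^R)^k = u (v u)^k`,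
and comparing prefixes of lengths `|u|` and then `|v|` shows that `u` and `v` are palindromes.
-/

/-- `w = z^k`: concatenation of `k` copies of `z`. -/
def listPow {α : Type*} (z : List α) (k : ℕ) : List α := (List.replicate k z).flatten

/-- A positive integer `p` is a period of `w` if `w[i] = w[i+p]` whenever both positions
are inside `w` (0-indexed). -/
def HasPeriod {α : Type*} (w : List α) (p : ℕ) : Prop :=
  0 < p ∧ ∀ i : ℕ, i + p < w.length → w[i]? = w[i + p]?

section listPow

variable {α : Type*}

theorem listPow_zero (z : List α) : listPow z 0 = [] := rfl

theorem listPow_succ (z : List α) (k : ℕ) : listPow z (k + 1) = z ++ listPow z k := by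
  simp [listPow, List.replicate_succ]

theorem reverse_listPow (z : List α) (k : ℕ) : (listPow z k).reverse = listPow z.reverse k := by
  simp [listPow, List.reverse_flatten]

theorem listPow_append_append_comm (x y : List α) (k : ℕ) :
    listPow (x ++ y) k ++ x = x ++ listPow (y ++ x) k := by
  induction k with
  | zero => simp [listPow_zero]
  | succ k ih => simp only [listPow_succ, List.append_assoc, ih]

theorem reverse_eq_self_of_listPow_append {u v : List α} {k : ℕ}
    (hpal : (listPow (u ++ v) k ++ u).reverse = listPow (u ++ v) k ++ u) (hk : k ≠ 0) :
    u.reverse = u ∧ v.reverse = v := by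
  rw [List.reverse_append, reverse_listPow, List.reverse_append, listPow_append_append_comm]
    at hpal
  obtain ⟨hu, hrest⟩ := List.append_inj hpal List.length_reverse
  obtain ⟨k, rfl⟩ := Nat.exists_eq_succ_of_ne_zero hk
  rw [hu, listPow_succ, listPow_succ, List.append_assoc, List.append_assoc] at hrest
  exact ⟨hu, (List.append_inj hrest List.length_reverse).1⟩

end listPow

namespace HasPeriod

variable {α : Type*} {p : ℕ}

theorem drop_eq_take {w : List α} (h : HasPeriod w p) : w.drop p = w.take (w.length - p) := by
  refine List.ext_getElem? fun i => ?_
  rw [List.getElem?_drop, List.getElem?_take]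
  split
  · rw [Nat.add_comm p i]
    exact (h.2 i (by omega)).symm
  · exact List.getElem?_eq_none (by omega)

theorem take {w : List α} (h : HasPeriod w p) (m : ℕ) : HasPeriod (w.take m) p := by
  refine ⟨h.1, fun i hi => ?_⟩
  rw [List.length_take] at hi
  rw [List.getElem?_take, List.getElem?_take, if_pos (by omega), if_pos (by omega)]
  exact h.2 i (by omega)

theorem eq_listPow_take_append_take {w : List α} (h : HasPeriod w p) :
    w = listPow (w.take p) (w.length / p) ++ w.take (w.length % p) := by
  rcases lt_or_ge w.length p with hlt | hle
  · rw [Nat.div_eq_of_lt hlt, Nat.mod_eq_of_lt hlt, listPow_zero, List.take_length, List.nil_append]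
  -- By periodicity `w = x w'` with `w'` the prefix of length `|w| - p`; induct on `w'`.
  have hp := h.1
  set w' := w.take (w.length - p) with hw'
  have hlen : w'.length = w.length - p := by simp [w']
  have ih := (h.take (w.length - p)).eq_listPow_take_append_take
  have hpow : listPow (w'.take p) (w'.length / p) = listPow (w.take p) (w'.length / p) := by
    rcases lt_or_ge w'.length p with hshort | hlong
    · rw [Nat.div_eq_of_lt hshort, listPow_zero, listPow_zero]
    · rw [hw', List.take_take, min_eq_left (hlen ▸ hlong)]
  have htail : w'.take (w'.length % p) = w.take (w.length % p) := by
    rw [hlen, hw', List.take_take, min_eq_left (Nat.mod_le _ _), ← Nat.mod_eq_sub_mod hle]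
  rw [hpow, htail, hlen] at ih
  rw [Nat.div_eq_sub_div hp hle, listPow_succ, List.append_assoc, ← ih, ← h.drop_eq_take,
    List.take_append_drop]
termination_by w.length
decreasing_by simp; omega

end HasPeriod

theorem stmt_0_general {α : Type*} (w : List α) (hpal : w.reverse = w)
    (p : ℕ) (hper : HasPeriod w p) (hple : p ≤ w.length) :
    ∃ u v : List α, u.reverse = u ∧ v.reverse = v ∧ v ≠ [] ∧
      u.length + v.length = p ∧ ∃ k : ℕ, 1 ≤ k ∧ w = listPow (u ++ v) k ++ u := by
  have hp := hper.1
  have hr : w.length % p < p := Nat.mod_lt _ hp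
  set u := w.take (w.length % p)
  set v := (w.take p).drop (w.length % p)
  have huv : u ++ v = w.take p := by
    rw [← List.take_append_drop (w.length % p) (w.take p), List.take_take, min_eq_left hr.le]
  have hw : w = listPow (u ++ v) (w.length / p) ++ u := huv ▸ hper.eq_listPow_take_append_take
  have hk : 1 ≤ w.length / p := Nat.div_pos hple hp
  have hlen : u.length + v.length = p := by
    rw [← List.length_append, huv, List.length_take, min_eq_left hple]
  obtain ⟨hu, hv⟩ := reverse_eq_self_of_listPow_append (hw ▸ hpal) (by omega)
  refine ⟨u, v, hu, hv, ?_, hlen, w.length / p, hk, hw⟩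
  intro hv_nil
  rw [hv_nil, List.length_nil, List.length_take] at hlen
  omega

/-- If `w` is a nonempty palindrome and `p` is a period of `w` with `1 ≤ p ≤ |w|`, then there
are palindromes `u`, `v` with `v ≠ ε`, `|u| + |v| = p` and `w = (uv)^k u` for some `k ≥ 1`. -/
theorem stmt_0 {α : Type*} (w : List α) (hne : w ≠ []) (hpal : w.reverse = w)
    (p : ℕ) (hper : HasPeriod w p) (hple : p ≤ w.length) :
    ∃ u v : List α, u.reverse = u ∧ v.reverse = v ∧ v ≠ [] ∧
      u.length + v.length = p ∧ ∃ k : ℕ, 1 ≤ k ∧ w = listPow (u ++ v) k ++ u :=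
  stmt_0_general w hpal p hper hple
end

section
/- Let w be a palindrome and let u be a proper suffix of w (i.e. u is a suffix of w with |u| < |w|) that is itself a palindrome. Then the number |w| − |u| is a period of w. -/
section

variable {α : Type*} {u w : List α}

theorem List.IsSuffix.isPrefix_of_reverse_eq (hsuf : u <:+ w) (hw : w.reverse = w)
    (hu : u.reverse = u) : u <+: w := by
  simpa only [hw, hu] using List.reverse_prefix.2 hsuf

theorem hasPeriod_of_isPrefix_of_isSuffix (hpre : u <+: w) (hsuf : u <:+ w)
    (hlt : u.length < w.length) : HasPeriod w (w.length - u.length) := by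
  refine ⟨by omega, fun i hi => ?_⟩
  have hiu : i < u.length := by omega
  rw [List.getElem?_eq_getElem (by omega), List.getElem?_eq_getElem hi, ← hpre.getElem hiu,
    hsuf.getElem hiu]
  simp only [Nat.add_comm]

end

/-- If `w` is a palindrome and `u` is a proper suffix of `w` that is a palindrome,
then `|w| - |u|` is a period of `w`. -/
theorem stmt_1 {α : Type*} (w u : List α) (hw : w.reverse = w) (hu : u.reverse = u)
    (hsuf : u <:+ w) (hlt : u.length < w.length) :
    HasPeriod w (w.length - u.length) :=
  hasPeriod_of_isPrefix_of_isSuffix (hsuf.isPrefix_of_reverse_eq hw hu) hsuf hlt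
end

section
/- Let w be a string that is not primitive, i.e. w = z^k for some string z and some integer k ≥ 2, and suppose w = uv where u and v are palindromes with v ≠ ε. Then there exist two distinct pairs (u₁, v₁) ≠ (u₂, v₂), where u₁, v₁, u₂, v₂ are palindromes with v₁ ≠ ε and v₂ ≠ ε, such that w = u₁v₁ = u₂v₂. -/
namespace List

variable {α : Type*}

theorem reverse_append_eq_rotate_length_iff (u v : List α) :
    (u ++ v).reverse = (u ++ v).rotate u.length ↔ u.reverse = u ∧ v.reverse = v := by
  rw [reverse_append, rotate_append_length_eq]
  constructor
  · intro h
    exact (append_inj h length_reverse).symm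
  · rintro ⟨hu, hv⟩
    rw [hu, hv]

theorem reverse_eq_rotate_iff_take_drop {w : List α} {c : ℕ} (hc : c ≤ w.length) :
    w.reverse = w.rotate c ↔
      (w.take c).reverse = w.take c ∧ (w.drop c).reverse = w.drop c := by
  have h := reverse_append_eq_rotate_length_iff (w.take c) (w.drop c)
  rwa [take_append_drop, length_take_of_le hc] at h

end List

theorem listPow_length {α : Type*} (z : List α) (k : ℕ) :
    (listPow z k).length = k * z.length := by
  simp [listPow, List.length_flatten]

theorem listPow_rotate_length {α : Type*} (z : List α) (k : ℕ) :
    (listPow z k).rotate z.length = listPow z k := by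
  cases k with
  | zero => simp [listPow]
  | succ k =>
    have hsucc : listPow z (k + 1) = z ++ listPow z k := by
      simp [listPow, List.replicate_succ]
    have hsucc' : listPow z (k + 1) = listPow z k ++ z := by
      simp [listPow, List.replicate_succ', List.flatten_append]
    rw [hsucc, List.rotate_append_length_eq, ← hsucc, hsucc']

theorem Nat.add_mod_ne_self {a p n : ℕ} (ha : a < n) (hp : 0 < p) (hpn : p < n) :
    (a + p) % n ≠ a := by
  intro h
  have hmod : a + p ≡ a + 0 [MOD n] := by
    rw [Nat.ModEq, h, Nat.add_zero, Nat.mod_eq_of_lt ha]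
  have : p % n = 0 := Nat.ModEq.add_left_cancel' a hmod
  rw [Nat.mod_eq_of_lt hpn] at this
  omega

/-- A non-primitive palindromic pair admits two distinct decompositions into two palindromes
(the second one nonempty). -/
theorem stmt_4 {α : Type*} (w z u v : List α) (k : ℕ) (hk : 2 ≤ k) (hzk : w = listPow z k)
    (huv : w = u ++ v) (hu : u.reverse = u) (hv : v.reverse = v) (hvne : v ≠ []) :
    ∃ u₁ v₁ u₂ v₂ : List α, (u₁, v₁) ≠ (u₂, v₂) ∧
      u₁.reverse = u₁ ∧ v₁.reverse = v₁ ∧ v₁ ≠ [] ∧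
      u₂.reverse = u₂ ∧ v₂.reverse = v₂ ∧ v₂ ≠ [] ∧
      w = u₁ ++ v₁ ∧ w = u₂ ++ v₂ := by
  have hwlen : w.length = k * z.length := by rw [hzk, listPow_length]
  have hulen : u.length < w.length := by
    simp [huv, List.length_pos_iff.mpr hvne]
  have hz : 0 < z.length := Nat.pos_of_ne_zero fun h => by rw [h, Nat.mul_zero] at hwlen; omega
  have hzw : z.length < w.length := by rw [hwlen]; nlinarith
  set c := (u.length + z.length) % w.length
  have hc : c < w.length := Nat.mod_lt _ (by omega)
  have hrot : w.rotate z.length = w := by rw [hzk, listPow_rotate_length]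
  have hcut : w.reverse = w.rotate c := by
    rw [List.rotate_mod, Nat.add_comm, ← List.rotate_rotate, hrot,
      huv, List.reverse_append_eq_rotate_length_iff]
    exact ⟨hu, hv⟩
  obtain ⟨htake, hdrop⟩ := (List.reverse_eq_rotate_iff_take_drop hc.le).mp hcut
  refine ⟨u, v, w.take c, w.drop c, ?_, hu, hv, hvne, htake, hdrop, ?_, huv,
    (List.take_append_drop c w).symm⟩
  · intro h
    have hcu : u.length = c := by rw [(Prod.mk.inj h).1, List.length_take_of_le hc.le]
    exact Nat.add_mod_ne_self hulen hz hzw hcu.symm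
  · simpa using hc
end

section
/- Let w be a string admitting two distinct decompositions into two palindromes: w = u₁v₁ = u₂v₂ where u₁, v₁, u₂, v₂ are palindromes, v₁ ≠ ε, v₂ ≠ ε, and |u₁| < |u₂|. Then w is not primitive, i.e. there exist a string z and an integer k ≥ 2 with w = z^k. -/
namespace List

variable {α : Type*}

@[simp]
lemma listPow_zero (z : List α) : listPow z 0 = [] := rfl

@[simp]
lemma listPow_one (z : List α) : listPow z 1 = z := by simp [listPow]

lemma listPow_add (z : List α) (k l : ℕ) :
    listPow z (k + l) = listPow z k ++ listPow z l := by
  rw [listPow, replicate_add, flatten_append]; rfl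

lemma pos_of_eq_listPow {x z : List α} {k : ℕ} (hx : x ≠ []) (h : x = listPow z k) : 0 < k :=
  Nat.pos_of_ne_zero fun hk => hx (by rw [h, hk, listPow_zero])

theorem exists_listPow_of_append_comm {x y : List α} (h : x ++ y = y ++ x) :
    ∃ z k l, x = listPow z k ∧ y = listPow z l := by
  rcases eq_or_ne x [] with rfl | hx
  · exact ⟨y, 0, 1, rfl, (listPow_one y).symm⟩
  rcases eq_or_ne y [] with rfl | hy
  · exact ⟨x, 1, 0, (listPow_one x).symm, rfl⟩
  rcases append_eq_append_iff.1 h with ⟨t, hxt, htx⟩ | ⟨t, hyt, hty⟩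
  · have : x.length + t.length < x.length + y.length := by
      simp [hxt, length_pos_iff.2 hx]
    obtain ⟨z, k, l, rfl, rfl⟩ := exists_listPow_of_append_comm (hxt.symm.trans htx)
    exact ⟨z, k, k + l, rfl, by rw [hxt, listPow_add]⟩
  · have : t.length + y.length < x.length + y.length := by
      simp [hyt, length_pos_iff.2 hy]
    obtain ⟨z, k, l, rfl, rfl⟩ := exists_listPow_of_append_comm (hty.symm.trans hyt)
    exact ⟨z, l + k, l, by rw [hyt, listPow_add], rfl⟩
termination_by x.length + y.length

theorem exists_listPow_of_rotate_eq_self {w : List α} {q : ℕ} (hq₀ : 0 < q)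
    (hq : q < w.length) (hrot : w.rotate q = w) :
    ∃ z k, 2 ≤ k ∧ w = listPow z k := by
  have hcomm : w.take q ++ w.drop q = w.drop q ++ w.take q := by
    rw [take_append_drop, ← rotate_eq_drop_append_take hq.le, hrot]
  obtain ⟨z, k, l, hk, hl⟩ := exists_listPow_of_append_comm hcomm
  have hk₀ := pos_of_eq_listPow (by simp [hq₀.ne', ne_nil_of_length_pos (hq₀.trans hq)]) hk
  have hl₀ := pos_of_eq_listPow (by simp [hq]) hl
  exact ⟨z, k + l, by omega, by rw [listPow_add, ← hk, ← hl, take_append_drop]⟩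

lemma rotate_length_eq_reverse_of_palindromes {u v : List α} (hu : u.reverse = u)
    (hv : v.reverse = v) : (u ++ v).rotate u.length = (u ++ v).reverse := by
  rw [rotate_append_length_eq, reverse_append, hu, hv]

lemma rotate_sub_eq_self_of_rotate_eq_rotate {w : List α} {a b : ℕ} (hab : a ≤ b)
    (h : w.rotate a = w.rotate b) : w.rotate (b - a) = w := by
  rwa [← Nat.sub_add_cancel hab, ← rotate_rotate, rotate_eq_rotate, eq_comm] at h

end List

open List in
theorem stmt_5_general {α : Type*} (w u₁ v₁ u₂ v₂ : List α)
    (hu₁ : u₁.reverse = u₁) (hv₁ : v₁.reverse = v₁)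
    (hu₂ : u₂.reverse = u₂) (hv₂ : v₂.reverse = v₂) (hv₂ne : v₂ ≠ [])
    (h1 : w = u₁ ++ v₁) (h2 : w = u₂ ++ v₂) (hlen : u₁.length < u₂.length) :
    ∃ (z : List α) (k : ℕ), 2 ≤ k ∧ w = listPow z k := by
  have hrot : w.rotate u₁.length = w.rotate u₂.length := by
    rw [h1, rotate_length_eq_reverse_of_palindromes hu₁ hv₁, ← h1, h2,
      rotate_length_eq_reverse_of_palindromes hu₂ hv₂]
  have hw : u₂.length < w.length := by simp [h2, length_pos_iff.2 hv₂ne]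
  exact exists_listPow_of_rotate_eq_self (by omega) (by omega)
    (rotate_sub_eq_self_of_rotate_eq_rotate hlen.le hrot)

/-- A string admitting two distinct decompositions into two palindromes is not primitive. -/
theorem stmt_5 {α : Type*} (w u₁ v₁ u₂ v₂ : List α)
    (hu₁ : u₁.reverse = u₁) (hv₁ : v₁.reverse = v₁) (hv₁ne : v₁ ≠ [])
    (hu₂ : u₂.reverse = u₂) (hv₂ : v₂.reverse = v₂) (hv₂ne : v₂ ≠ [])
    (h1 : w = u₁ ++ v₁) (h2 : w = u₂ ++ v₂) (hlen : u₁.length < u₂.length) :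
    ∃ (z : List α) (k : ℕ), 2 ≤ k ∧ w = listPow z k :=
  stmt_5_general w u₁ v₁ u₂ v₂ hu₁ hv₁ hu₂ hv₂ hv₂ne h1 h2 hlen
end

section
/- Let w be a nonempty palindrome with minimal period p and canonical decomposition w = (xy)^k x (so x, y are palindromes, y ≠ ε, |x| + |y| = p, k ≥ 1). Let w[i..j] be an occurrence of a palindrome in w (1 ≤ i, i − 1 ≤ j ≤ |w|) with j − i + 1 ≥ p − 1. Then the center of w[i..j] coincides with the center of one of the occurrences of x or y in the decomposition; equivalently, i + j ≡ |x| + 1 (mod p). -/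
/-- The substring `w[i..j]` (1-indexed, `w[i..i-1] = ε`). -/
def substr {α : Type*} (w : List α) (i j : ℕ) : List α := (w.drop (i - 1)).take (j + 1 - i)

/-!
Extend `w` to the bi-infinite `p`-periodic word `f : ℤ → Option α`. A palindromic factor of `w`
of length at least `p - 1` meets every residue class modulo `p`, except, for length exactly
`p - 1`, one class that the reflection maps to itself; so `f` is symmetric about its centre.
Applied to `w` itself and to `w[i..j]`, this gives two reflections of `f`; their composition
is a translation by `i + j - 1 - |w|`, so `f` has period `gcd(p, i + j - 1 - |w|)`, which is
then also a period of `w`. By minimality of `p`, `p ∣ i + j - 1 - |w|`, and `|w| = k p + |x|`.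
-/

section

variable {α : Type*}

theorem hasPeriod_of_length_le {w : List α} {q : ℕ} (hq : 0 < q) (hlen : w.length ≤ q) :
    HasPeriod w q :=
  ⟨hq, fun _ hi => by omega⟩

theorem HasPeriod.getElem?_mod {w : List α} {p : ℕ} (h : HasPeriod w p) {m : ℕ}
    (hm : m < w.length) : w[m]? = w[m % p]? := by
  have hp := h.1
  induction m using Nat.strong_induction_on with
  | _ m ih =>
    rcases lt_or_ge m p with hmp | hmp
    · rw [Nat.mod_eq_of_lt hmp]
    · rw [Nat.mod_eq_sub_mod hmp, ← ih (m - p) (by omega) (by omega), h.2 (m - p) (by omega),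
        Nat.sub_add_cancel hmp]

theorem List.getElem?_eq_of_reverse_eq {l : List α} (hl : l.reverse = l) {t : ℕ}
    (ht : t < l.length) : l[t]? = l[l.length - 1 - t]? := by
  conv_lhs => rw [← hl]
  exact List.getElem?_reverse ht

theorem List.getElem?_eq_of_drop_take_reverse_eq {w : List α} {s L : ℕ}
    (hpal : ((w.drop s).take L).reverse = (w.drop s).take L) (hL : s + L ≤ w.length)
    {t : ℕ} (ht : t < L) : w[s + t]? = w[s + L - 1 - t]? := by
  have hlen : ((w.drop s).take L).length = L := by simp only [length_take, length_drop]; omega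
  have h := List.getElem?_eq_of_reverse_eq hpal (hlen ▸ ht)
  rw [hlen, getElem?_take_of_lt ht, getElem?_take_of_lt (by omega), getElem?_drop,
    getElem?_drop] at h
  rwa [show s + (L - 1 - t) = s + L - 1 - t by omega] at h

theorem Function.Periodic.intGcd {β : Type*} {f : ℤ → β} {a b : ℤ} (ha : Periodic f a)
    (hb : Periodic f b) : Periodic f (Int.gcd a b) := by
  rw [Int.gcd_eq_gcd_ab, mul_comm a, mul_comm b]
  exact (ha.int_mul _).add_period (hb.int_mul _)

theorem Function.periodic_sub_of_reflect {G β : Type*} [AddCommGroup G] {f : G → β} {c₁ c₂ : G}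
    (h₁ : ∀ a, f a = f (c₁ - a)) (h₂ : ∀ a, f a = f (c₂ - a)) : Periodic f (c₂ - c₁) := by
  intro a
  rw [h₁ a, h₂ (c₁ - a)]
  congr 1
  abel

def periodicExt (w : List α) (p : ℕ) (a : ℤ) : Option α := w[(a % p).toNat]?

theorem periodicExt_congr (w : List α) (p : ℕ) {a b : ℤ} (h : a ≡ b [ZMOD p]) :
    periodicExt w p a = periodicExt w p b := by
  rw [periodicExt, periodicExt, h.eq]

theorem periodicExt_periodic (w : List α) (p : ℕ) : Function.Periodic (periodicExt w p) p :=
  fun _ => periodicExt_congr w p (Int.add_modEq_right ..)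

theorem HasPeriod.periodicExt_natCast {w : List α} {p : ℕ} (h : HasPeriod w p) {m : ℕ}
    (hm : m < w.length) : periodicExt w p m = w[m]? := by
  rw [h.getElem?_mod hm, periodicExt, ← Int.natCast_mod, Int.toNat_natCast]

theorem HasPeriod.of_periodic_periodicExt {w : List α} {p q : ℕ} (hp : HasPeriod w p)
    (hq : 0 < q) (h : Function.Periodic (periodicExt w p) q) : HasPeriod w q :=
  ⟨hq, fun m hm => by
    rw [← hp.periodicExt_natCast (by omega), ← hp.periodicExt_natCast hm, Nat.cast_add, h]⟩

theorem HasPeriod.periodicExt_reflect {w : List α} {p s L : ℕ} (hp : HasPeriod w p)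
    (hpal : ((w.drop s).take L).reverse = (w.drop s).take L) (hL : s + L ≤ w.length)
    (hpL : p ≤ L + 1) (a : ℤ) :
    periodicExt w p a = periodicExt w p (2 * s + L - 1 - a) := by
  obtain ⟨r, hrp, har⟩ : ∃ r : ℕ, r < p ∧ a ≡ s + r [ZMOD p] := by
    have hpos : (0 : ℤ) < p := by exact_mod_cast hp.1
    refine ⟨((a - s) % p).toNat, by have := Int.emod_lt_of_pos (a - s) hpos; omega, ?_⟩
    rw [Int.toNat_of_nonneg (Int.emod_nonneg _ hpos.ne')]
    simpa using ((Int.mod_modEq (a - s) p).add_left (s : ℤ)).symm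
  have hreflect : 2 * (s : ℤ) + L - 1 - a ≡ s + L - 1 - r [ZMOD p] := by
    have := har.sub_left (2 * (s : ℤ) + L - 1)
    rwa [show 2 * (s : ℤ) + L - 1 - (s + r) = s + L - 1 - r by ring] at this
  rcases lt_or_ge r L with hrL | hrL
  · calc periodicExt w p a = periodicExt w p (s + r : ℕ) := periodicExt_congr w p (by simpa)
      _ = w[s + r]? := hp.periodicExt_natCast (by omega)
      _ = w[s + L - 1 - r]? := List.getElem?_eq_of_drop_take_reverse_eq hpal hL hrL
      _ = periodicExt w p (s + L - 1 - r : ℕ) := (hp.periodicExt_natCast (by omega)).symm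
      _ = periodicExt w p (2 * s + L - 1 - a) :=
        periodicExt_congr w p (by
          rw [Nat.cast_sub (by omega), Nat.cast_sub (by omega)]; push_cast; exact hreflect.symm)
  · -- `r = L = p - 1`: the reflection of `a` is congruent to `a - p`
    refine periodicExt_congr w p (har.trans (Int.modEq_iff_dvd.2 ⟨-1, ?_⟩) |>.trans hreflect.symm)
    have : (r : ℤ) = L ∧ (p : ℤ) = L + 1 := by omega
    rw [this.1, this.2]
    ring

theorem HasPeriod.dvd_of_drop_take_reverse_eq {w : List α} {p s L : ℕ} (hpal : w.reverse = w)
    (hp : HasPeriod w p) (hmin : ∀ q, HasPeriod w q → p ≤ q)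
    (hsub : ((w.drop s).take L).reverse = (w.drop s).take L) (hL : s + L ≤ w.length)
    (hpL : p ≤ L + 1) : (p : ℤ) ∣ 2 * s + L - w.length := by
  have hpw : p ≤ w.length + 1 := hmin _ (hasPeriod_of_length_le w.length.succ_pos le_self_add)
  have hw : ((w.drop 0).take w.length).reverse = (w.drop 0).take w.length := by simpa
  have hd := Function.periodic_sub_of_reflect (hp.periodicExt_reflect hw (zero_add _).le hpw)
    (hp.periodicExt_reflect hsub hL hpL)
  rw [show (2 * s + L - 1 : ℤ) - (2 * (0 : ℕ) + w.length - 1) = 2 * s + L - w.length by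
    push_cast; ring] at hd
  have hp0 : (p : ℤ) ≠ 0 := by exact_mod_cast hp.1.ne'
  have hgcd := (periodicExt_periodic w p).intGcd hd
  have hgp : Int.gcd p (2 * s + L - w.length) = p :=
    le_antisymm (Int.gcd_le_natAbs_left _ hp0)
      (hmin _ (hp.of_periodic_periodicExt (Int.gcd_pos_of_ne_zero_left _ hp0) hgcd))
  exact hgp ▸ Int.gcd_dvd_right ..

end

theorem stmt_7_general {α : Type*} (w x y : List α) (p k : ℕ)
    (hpal : w.reverse = w)
    (hper : HasPeriod w p) (hmin : ∀ q, HasPeriod w q → p ≤ q)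
    (hxy : x.length + y.length = p) (hdec : w = listPow (x ++ y) k ++ x)
    (i j : ℕ) (hi : 1 ≤ i) (hj : j ≤ w.length)
    (hlong : p + i ≤ j + 2)
    (hsubpal : (substr w i j).reverse = substr w i j) :
    (i + j) % p = (x.length + 1) % p := by
  have hlen : w.length = k * p + x.length := by
    subst hdec; simp [listPow, ← hxy]
  have hij : i ≤ j + 1 := by have := hper.1; omega
  obtain ⟨t, ht⟩ := hper.dvd_of_drop_take_reverse_eq hpal hmin hsubpal (by omega) (by omega)
  refine (Nat.modEq_iff_dvd.2 ⟨t + k, ?_⟩).symm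
  rw [hlen] at ht
  push_cast at ht ⊢
  rw [Nat.cast_sub hi, Nat.cast_sub hij] at ht
  push_cast at ht
  linear_combination ht

/-- If `w` is a nonempty palindrome with minimal period `p` and canonical decomposition
`(xy)^k x`, then every subpalindrome occurrence `w[i..j]` of length at least `p - 1`
has its center at the center of an occurrence of `x` or `y`, i.e. `i + j ≡ |x| + 1 (mod p)`. -/
theorem stmt_7 {α : Type*} (w x y : List α) (p k : ℕ)
    (hne : w ≠ []) (hpal : w.reverse = w)
    (hper : HasPeriod w p) (hmin : ∀ q, HasPeriod w q → p ≤ q)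
    (hx : x.reverse = x) (hy : y.reverse = y) (hyne : y ≠ [])
    (hxy : x.length + y.length = p) (hk : 1 ≤ k) (hdec : w = listPow (x ++ y) k ++ x)
    (i j : ℕ) (hi : 1 ≤ i) (hij : i ≤ j + 1) (hj : j ≤ w.length)
    (hlong : p + i ≤ j + 2)
    (hsubpal : (substr w i j).reverse = substr w i j) :
    (i + j) % p = (x.length + 1) % p :=
  stmt_7_general w x y p k hpal hper hmin hxy hdec i j hi hj hlong hsubpal
end

section
/- Let s = w[i..j] be a leading subpalindrome of a string w, with canonical decomposition s = (uv)^k u (u, v palindromes, v ≠ ε, |uv| equal to the minimal period of s, k ≥ 1). Let t = w[i'..j] be the longest proper suffix-palindrome of s (i.e. i < i' ≤ j + 1 and w[i'..j] is a palindrome) whose occurrence is leading in w. Then t = u if s = uvu (i.e. k = 1), and t = uvu otherwise (i.e. if k ≥ 2). -/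
/-- `(i, j)` is an occurrence of a subpalindrome of `w`. -/
def SubPalAt {α : Type*} (w : List α) (i j : ℕ) : Prop :=
  1 ≤ i ∧ i ≤ j + 1 ∧ j ≤ w.length ∧ (substr w i j).reverse = substr w i j

/-- The occurrence `w[i..j]` is leading in `w`: every period `p` of every strictly longer
subpalindrome `w[i..j]` with the same right end satisfies `2p > j - i + 1`. -/
def LeadingAt {α : Type*} (w : List α) (i j : ℕ) : Prop :=
  ∀ i2 p : ℕ, 1 ≤ i2 → i2 < i → (substr w i2 j).reverse = substr w i2 j →
    HasPeriod (substr w i2 j) p → 2 * p > j + 1 - i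

section Development

variable {α : Type*}

theorem length_listPow (z : List α) (k : ℕ) : (listPow z k).length = k * z.length := by
  simp [listPow]

theorem listPow_add (z : List α) (a b : ℕ) : listPow z (a + b) = listPow z a ++ listPow z b := by
  simp only [listPow, List.replicate_add, List.flatten_append]

theorem listPow_one (z : List α) : listPow z 1 = z := by
  simp [listPow]

theorem drop_listPow_append (z u : List α) (a b : ℕ) :
    (listPow z (a + b) ++ u).drop (a * z.length) = listPow z b ++ u := by
  rw [listPow_add, List.append_assoc, ← length_listPow, List.drop_left]

section Periods

variable {s : List α} {p q d : ℕ}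

theorem HasPeriod.drop (h : HasPeriod s p) (d : ℕ) : HasPeriod (s.drop d) p := by
  refine ⟨h.1, fun x hx => ?_⟩
  rw [List.length_drop] at hx
  rw [List.getElem?_drop, List.getElem?_drop, ← Nat.add_assoc]
  exact h.2 (d + x) (by omega)

theorem HasPeriod.sub (hp : HasPeriod s p) (hq : HasPeriod s q) (hpq : p < q)
    (h : p + q ≤ s.length) : HasPeriod s (q - p) := by
  refine ⟨by omega, fun x hx => ?_⟩
  rcases le_or_gt p x with hx' | hx'
  · have e1 := hp.2 (x - p) (by omega)
    have e2 := hq.2 (x - p) (by omega)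
    rw [Nat.sub_add_cancel hx'] at e1
    rw [show x - p + q = x + (q - p) by omega] at e2
    rw [← e1, e2]
  · have e1 := hq.2 x (by omega)
    have e2 := hp.2 (x + (q - p)) (by omega)
    rw [show x + (q - p) + p = x + q by omega] at e2
    rw [e1, ← e2]

/-- Weak Fine–Wilf theorem. -/
theorem HasPeriod.gcd {p q : ℕ} (hp : HasPeriod s p) (hq : HasPeriod s q)
    (h : p + q ≤ s.length) : HasPeriod s (Nat.gcd p q) := by
  rcases lt_trichotomy p q with hpq | rfl | hqp
  · have := hp.gcd (hp.sub hq hpq h) (by omega)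
    rwa [Nat.gcd_sub_self_right hpq.le] at this
  · rwa [Nat.gcd_self]
  · have := (hq.sub hp hqp (by omega)).gcd hq (by omega)
    rwa [Nat.gcd_sub_self_left hqp.le] at this
termination_by p + q
decreasing_by all_goals have := hp.1; have := hq.1; omega

theorem HasPeriod.of_drop (hp : HasPeriod s p) (hq : HasPeriod (s.drop d) q)
    (h : d + p + q ≤ s.length) : HasPeriod s q := by
  refine ⟨hq.1, fun x hx => ?_⟩
  induction hc : s.length - x using Nat.strong_induction_on generalizing x with
  | _ c ih =>
    rcases le_or_gt d x with hx' | hx'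
    · have := hq.2 (x - d) (by rw [List.length_drop]; omega)
      rwa [List.getElem?_drop, List.getElem?_drop, Nat.add_sub_cancel' hx',
        show d + (x - d + q) = x + q by omega] at this
    · have := hp.1
      rw [hp.2 x (by omega), hp.2 (x + q) (by omega), show x + q + p = x + p + q by omega]
      exact ih _ (by omega) (x + p) (by omega) rfl

theorem hasPeriod_of_reverse_drop (hd : 0 < d) (hs : s.reverse = s)
    (ht : (s.drop d).reverse = s.drop d) : HasPeriod s d := by
  refine ⟨hd, fun x hx => ?_⟩
  have hlen : (s.drop d).length = s.length - d := List.length_drop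
  calc s[x]? = s[s.length - 1 - x]? := by
        conv_lhs => rw [← hs]
        rw [List.getElem?_reverse (by omega)]
    _ = (s.drop d)[(s.drop d).length - 1 - x]? := by rw [List.getElem?_drop]; congr 1; omega
    _ = (s.drop d)[x]? := by
        conv_rhs => rw [← ht]
        rw [List.getElem?_reverse (by omega)]
    _ = s[x + d]? := by rw [List.getElem?_drop, Nat.add_comm]

def IsMinPeriod (s : List α) (p : ℕ) : Prop :=
  HasPeriod s p ∧ ∀ q, HasPeriod s q → p ≤ q

theorem IsMinPeriod.dvd_of_hasPeriod (hp : IsMinPeriod s p) (hq : HasPeriod s q)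
    (h : q + p ≤ s.length) : p ∣ q := by
  have hgcd : Nat.gcd q p = p :=
    le_antisymm (Nat.gcd_le_right _ hp.1.1) (hp.2 _ (hq.gcd hp.1 h))
  exact hgcd ▸ Nat.gcd_dvd_left q p

theorem IsMinPeriod.le_of_hasPeriod_drop (hp : IsMinPeriod s p) (hq : HasPeriod (s.drop d) q)
    (h : d + p + q ≤ s.length) : p ≤ q := by
  have hg := hq.gcd (hp.1.drop d) (by rw [List.length_drop]; omega)
  have hle : Nat.gcd q p ≤ q := Nat.gcd_le_left _ hq.1
  exact (hp.2 _ (hp.1.of_drop hg (by omega))).trans hle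

end Periods

section Occurrences

variable {w : List α} {i j i₂ : ℕ}

theorem substr_eq_drop (hi : 1 ≤ i) (hi₂ : i ≤ i₂) :
    substr w i₂ j = (substr w i j).drop (i₂ - i) := by
  rw [substr, substr, List.drop_take, List.drop_drop, show i - 1 + (i₂ - i) = i₂ - 1 by omega,
    show j + 1 - i - (i₂ - i) = j + 1 - i₂ by omega]

theorem SubPalAt.length_substr (h : SubPalAt w i j) : (substr w i j).length = j + 1 - i := by
  simp only [substr, List.length_take, List.length_drop]
  have := h.1
  have := h.2.2.1
  omega

theorem SubPalAt.hasPeriod_sub (h : SubPalAt w i j) (hi₂ : i < i₂)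
    (hpal : (substr w i₂ j).reverse = substr w i₂ j) : HasPeriod (substr w i j) (i₂ - i) :=
  hasPeriod_of_reverse_drop (by omega) h.2.2.2 (by rwa [← substr_eq_drop h.1 hi₂.le])

variable {P m : ℕ}

theorem SubPalAt.leadingAt_add (hsub : SubPalAt w i j) (hlead : LeadingAt w i j)
    (hP : IsMinPeriod (substr w i j) P) (hshort : j + 1 - (i + m) < 2 * P)
    (hgap : ∀ i₂, i < i₂ → i₂ < i + m → (substr w i₂ j).reverse = substr w i₂ j →
      i₂ + P ≤ i + m) :
    LeadingAt w (i + m) j := by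
  intro i₂ p h1 h2 hpal hper
  rcases lt_trichotomy i₂ i with hlt | rfl | hgt
  · have := hlead i₂ p h1 hlt hpal hper
    omega
  · have := hP.2 p hper
    omega
  · have hgap₂ := hgap i₂ hgt h2 hpal
    have hlen := hsub.length_substr
    rw [substr_eq_drop hsub.1 hgt.le] at hper
    have := hper.1
    by_contra! hp
    have := hP.le_of_hasPeriod_drop hper (by omega)
    omega

theorem SubPalAt.eq_add_of_longest (hsub : SubPalAt w i j) (hlead : LeadingAt w i j)
    (hP : IsMinPeriod (substr w i j) P) (hshort : j + 1 - (i + m) < 2 * P) (hm : 0 < m)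
    (hsubm : SubPalAt w (i + m) j)
    (hgap : ∀ i₂, i < i₂ → i₂ < i + m → (substr w i₂ j).reverse = substr w i₂ j →
      i₂ + P ≤ i + m ∧ 2 * P ≤ j + 1 - i₂)
    {i' : ℕ} (hi' : i < i') (hsub' : SubPalAt w i' j) (hlead' : LeadingAt w i' j)
    (hlongest : ∀ i'', i < i'' → SubPalAt w i'' j → LeadingAt w i'' j → i' ≤ i'') :
    i' = i + m := by
  refine le_antisymm (hlongest _ (by omega) hsubm ?_) ?_
  · exact hsub.leadingAt_add hlead hP hshort fun i₂ h1 h2 hpal => (hgap i₂ h1 h2 hpal).1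
  · by_contra! h
    have hlong := (hgap i' hi' h hsub'.2.2.2).2
    have := hlead' i P hsub.1 hi' hsub.2.2.2 hP.1
    omega

end Occurrences

end Development

theorem stmt_9_general {α : Type*} (w u v : List α) (i j i' k : ℕ)
    (hsub : SubPalAt w i j) (hlead : LeadingAt w i j)
    (hu : u.reverse = u) (hv : v.reverse = v) (hvne : v ≠ [])
    (hper : HasPeriod (substr w i j) (u.length + v.length))
    (hmin : ∀ q, HasPeriod (substr w i j) q → u.length + v.length ≤ q)
    (hdec : substr w i j = listPow (u ++ v) k ++ u)
    (hi' : i < i') (hsub' : SubPalAt w i' j) (hlead' : LeadingAt w i' j)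
    (hlongest : ∀ i'', i < i'' → SubPalAt w i'' j → LeadingAt w i'' j → i' ≤ i'') :
    (k = 1 → substr w i' j = u) ∧ (2 ≤ k → substr w i' j = u ++ v ++ u) := by
  set P := u.length + v.length with hPuv
  have hP : IsMinPeriod (substr w i j) P := ⟨hper, hmin⟩
  have hv0 : 0 < v.length := List.length_pos_iff.mpr hvne
  have hi : 1 ≤ i := hsub.1
  have hn : j + 1 - i = k * P + u.length := by
    rw [← hsub.length_substr, hdec]
    simp [length_listPow, hPuv]
  have hsuffix (a b : ℕ) (hk : k = a + b) : substr w (i + a * P) j = listPow (u ++ v) b ++ u := by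
    rw [substr_eq_drop hsub.1 (by omega), Nat.add_sub_cancel_left, hdec, hk, hPuv,
      ← List.length_append, drop_listPow_append]
  constructor
  · rintro rfl
    have ht : substr w (i + P) j = u := by simpa [listPow] using hsuffix 1 0 rfl
    have hsubm : SubPalAt w (i + P) j := ⟨by omega, by omega, hsub.2.2.1, by rw [ht, hu]⟩
    have hgap (i₂ : ℕ) (h1 : i < i₂) (h2 : i₂ < i + P)
        (hpal : (substr w i₂ j).reverse = substr w i₂ j) :
        i₂ + P ≤ i + P ∧ 2 * P ≤ j + 1 - i₂ :=
      absurd (hmin _ (hsub.hasPeriod_sub h1 hpal)) (by omega)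
    rw [hsub.eq_add_of_longest hlead hP (by omega) hper.1 hsubm hgap hi' hsub' hlead' hlongest, ht]
  · intro hk
    have ht : substr w (i + (k - 1) * P) j = u ++ v ++ u := by
      rw [hsuffix (k - 1) 1 (by omega), listPow_one]
    have hkP : (k - 1) * P + P = k * P := by rw [← Nat.succ_mul]; congr 1; omega
    have hsubm : SubPalAt w (i + (k - 1) * P) j :=
      ⟨by omega, by omega, hsub.2.2.1, by simp [ht, hu, hv]⟩
    have hgap (i₂ : ℕ) (h1 : i < i₂) (h2 : i₂ < i + (k - 1) * P)
        (hpal : (substr w i₂ j).reverse = substr w i₂ j) :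
        i₂ + P ≤ i + (k - 1) * P ∧ 2 * P ≤ j + 1 - i₂ := by
      have hdvd := hP.dvd_of_hasPeriod (hsub.hasPeriod_sub h1 hpal)
        (by rw [hsub.length_substr]; omega)
      have := Nat.le_of_dvd (by omega) (Nat.dvd_sub (dvd_mul_left P (k - 1)) hdvd)
      omega
    rw [hsub.eq_add_of_longest hlead hP (by omega) (Nat.mul_pos (by omega) hper.1) hsubm hgap
      hi' hsub' hlead' hlongest, ht]

/-- If `s = w[i..j]` is a leading subpalindrome of `w` with canonical decomposition
`(uv)^k u` and `t = w[i'..j]` is the longest proper suffix-palindrome of `s` whose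
occurrence is leading in `w`, then `t = u` if `k = 1`, and `t = uvu` if `k ≥ 2`. -/
theorem stmt_9 {α : Type*} (w u v : List α) (i j i' k : ℕ)
    (hsub : SubPalAt w i j) (hlead : LeadingAt w i j)
    (hu : u.reverse = u) (hv : v.reverse = v) (hvne : v ≠ [])
    (hper : HasPeriod (substr w i j) (u.length + v.length))
    (hmin : ∀ q, HasPeriod (substr w i j) q → u.length + v.length ≤ q)
    (hk : 1 ≤ k) (hdec : substr w i j = listPow (u ++ v) k ++ u)
    (hi' : i < i') (hsub' : SubPalAt w i' j) (hlead' : LeadingAt w i' j)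
    (hlongest : ∀ i'', i < i'' → SubPalAt w i'' j → LeadingAt w i'' j → i' ≤ i'') :
    (k = 1 → substr w i' j = u) ∧ (2 ≤ k → substr w i' j = u ++ v ++ u) :=
  stmt_9_general w u v i j i' k hsub hlead hu hv hvne hper hmin hdec hi' hsub' hlead' hlongest
end

section
/- Let u and v be suffix-palindromes of a string w whose occurrences as suffixes are both leading in w, with |u| > |v|. Then 2|u| > 3|v|. -/
/-- A suffix-palindrome of `w` whose occurrence (as a suffix) is leading in `w`. -/
def LeadingSufPal {α : Type*} (w u : List α) : Prop :=
  u <:+ w ∧ u.reverse = u ∧ LeadingAt w (w.length - u.length + 1) w.length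

/-!
The shorter palindrome `v` is a suffix of the palindrome `u`, hence also a prefix of it, so
`|u| - |v|` is a period of `u`. Since `u` is a longer palindrome ending where `v` does, `v` being
leading forces `2 (|u| - |v|) > |v|`.
-/

lemma List.IsSuffix.substr_eq {α : Type*} {w u : List α} (h : u <:+ w) :
    substr w (w.length - u.length + 1) w.length = u := by
  have hle := h.length_le
  rw [substr, Nat.add_sub_cancel, show w.length + 1 - (w.length - u.length + 1) = u.length by omega,
    ← List.suffix_iff_eq_drop.mp h, List.take_length]

lemma List.IsSuffix.isPrefix_of_reverse_eq_s11 {α : Type*} {u v : List α} (h : v <:+ u)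
    (hu : u.reverse = u) (hv : v.reverse = v) : v <+: u := by
  rw [← hu, ← hv]
  exact List.reverse_prefix.mpr h

lemma hasPeriod_sub_of_isPrefix_of_isSuffix {α : Type*} {u v : List α} (hpre : v <+: u)
    (hsuf : v <:+ u) (hlen : v.length < u.length) : HasPeriod u (u.length - v.length) := by
  obtain ⟨t, rfl⟩ := hpre
  obtain ⟨s, hs⟩ := hsuf
  have hslen : s.length = t.length := by have := congrArg List.length hs; simp at this; omega
  refine ⟨by simpa using hlen, fun i hi => ?_⟩
  have hleft : (v ++ t)[i]? = v[i]? := List.getElem?_append_left (by simp at hi; omega)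
  rw [hleft, ← hs, List.getElem?_append_right (by simp only [List.length_append] at hi ⊢; omega)]
  simp only [List.length_append]
  congr 1
  omega

/-- If `u`, `v` are leading suffix-palindromes of `w` with `|u| > |v|`, then `2|u| > 3|v|`. -/
theorem stmt_11 {α : Type*} (w u v : List α)
    (hu : LeadingSufPal w u) (hv : LeadingSufPal w v) (hlen : v.length < u.length) :
    2 * u.length > 3 * v.length := by
  obtain ⟨husuf, hupal, -⟩ := hu
  obtain ⟨hvsuf, hvpal, hvlead⟩ := hv
  have hvu : v <:+ u := List.suffix_of_suffix_length_le hvsuf husuf hlen.le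
  have hper := hasPeriod_sub_of_isPrefix_of_isSuffix (hvu.isPrefix_of_reverse_eq_s11 hupal hvpal)
    hvu hlen
  have hule := husuf.length_le
  have key := hvlead (w.length - u.length + 1) (u.length - v.length) (by omega) (by omega)
    (by rw [husuf.substr_eq]; exact hupal) (by rw [husuf.substr_eq]; exact hper)
  omega
end

section
/- Let w be a nonempty string that is a concatenation of two palindromes. Then there exist palindromes x and y with w = xy such that either x is the longest prefix of w that is a palindrome, or y is the longest suffix of w that is a palindrome. -/
/-!
Let `w = ab` with `a`, `b` palindromes, and suppose some palindromic prefix `u` of `w` is longer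
than `a` and some palindromic suffix `v` is longer than `b`; write `w = s e t r` with `a = s e`,
`b = t r`, `u = s e t`, `v = e t r`. A palindrome with a palindromic prefix (suffix) has that prefix
as a border, so `u` has period `|t|` and `v` has period `|e|`. Their overlap `e t` has both periods,
so by Fine and Wilf it has period `gcd |t| |e|`; since `e t` is a prefix of `v` at least one `|e|`
long, that period spreads to all of `v`, hence `b = t r` has period `|t|`, which for a palindrome
means that `r` is a palindrome. So whenever `b` is not the longest palindromic suffix, every
palindromic prefix longer than `a`, in particular the longest one, leaves a palindrome behind.
-/

namespace List

variable {α : Type*}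

theorem hasPeriod_iff_drop_prefix {w : List α} {p : ℕ} : HasPeriod w p ↔ drop p w <+: w := by
  refine ⟨HasPeriod.drop_prefix p, fun h => ?_⟩
  rw [HasPeriod]
  conv_lhs => rw [← take_append_drop p w]
  exact (prefix_append_right_inj _).mpr h

theorem HasPeriod.of_dvd {w : List α} {g p : ℕ} (h : HasPeriod w g) (hd : g ∣ p) :
    HasPeriod w p := by
  rw [hasPeriod_iff_forall_getElem?_mod] at h ⊢
  intro i hi
  rw [h i hi, h (i % p) (lt_of_le_of_lt (Nat.mod_le i p) hi), Nat.mod_mod_of_dvd i hd]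

theorem HasPeriod.of_hasPeriod_take {w : List α} {p g k : ℕ} (hp : HasPeriod w p)
    (hg : HasPeriod (w.take k) g) (hd : g ∣ p) (hp0 : 0 < p) (hk : p ≤ k) : HasPeriod w g := by
  rw [hasPeriod_iff_forall_getElem?_mod] at hp hg ⊢
  intro i hi
  have hmod : i % p < k := lt_of_lt_of_le (Nat.mod_lt i hp0) hk
  have hmodg : i % p % g < k := lt_of_le_of_lt (Nat.mod_le _ g) hmod
  calc w[i]? = w[i % p]? := hp i hi
    _ = (w.take k)[i % p]? := (getElem?_take_of_lt hmod).symm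
    _ = (w.take k)[i % p % g]? :=
      hg _ (by rw [length_take]; exact lt_min hmod ((Nat.mod_le i p).trans_lt hi))
    _ = w[i % g]? := by rw [getElem?_take_of_lt hmodg, Nat.mod_mod_of_dvd i hd]

theorem hasPeriod_length_of_reverse_eq_of_prefix {a t : List α}
    (hu : (a ++ t).reverse = a ++ t) (ha : a.reverse = a) : HasPeriod (a ++ t) t.length := by
  rw [hasPeriod_iff_drop_prefix]
  nth_rw 1 [← hu]
  rw [reverse_append, ha, drop_left' length_reverse]
  exact prefix_append a t

theorem hasPeriod_length_of_reverse_eq_of_suffix {e b : List α}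
    (hv : (e ++ b).reverse = e ++ b) (hb : b.reverse = b) : HasPeriod (e ++ b) e.length := by
  rw [hasPeriod_iff_drop_prefix, drop_left]
  nth_rw 1 [← hv]
  rw [reverse_append, hb]
  exact prefix_append b e.reverse

theorem reverse_drop_eq_of_hasPeriod {b : List α} {p : ℕ} (hb : b.reverse = b)
    (h : HasPeriod b p) : (b.drop p).reverse = b.drop p := by
  have hrev : (b.drop p).reverse <+: b := by
    have := reverse_prefix.mpr (drop_suffix p b)
    rwa [hb] at this
  have hrev_eq := prefix_iff_eq_take.mp hrev
  rw [length_reverse] at hrev_eq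
  exact hrev_eq.trans (prefix_iff_eq_take.mp (hasPeriod_iff_drop_prefix.mp h)).symm

theorem reverse_eq_of_overlapping_palindromes {s e t r : List α}
    (ha : (s ++ e).reverse = s ++ e) (hb : (t ++ r).reverse = t ++ r)
    (hu : (s ++ e ++ t).reverse = s ++ e ++ t) (hv : (e ++ (t ++ r)).reverse = e ++ (t ++ r))
    (he : e ≠ []) : r.reverse = r := by
  have hu_per : HasPeriod (s ++ e ++ t) t.length :=
    hasPeriod_length_of_reverse_eq_of_prefix hu ha
  have hv_per : HasPeriod (e ++ (t ++ r)) e.length :=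
    hasPeriod_length_of_reverse_eq_of_suffix hv hb
  have hoverlap : HasPeriod (e ++ t) (t.length.gcd e.length) := by
    refine HasPeriod.gcd (hu_per.infix ⟨s, [], by simp⟩) (hv_per.infix ⟨[], r, by simp⟩) ?_
    simp only [length_append]
    omega
  have hv_gcd : HasPeriod (e ++ (t ++ r)) (t.length.gcd e.length) :=
    hv_per.of_hasPeriod_take (k := e.length + t.length) (by simpa [← append_assoc] using hoverlap)
      (Nat.gcd_dvd_right _ _) (length_pos_iff.mpr he) (Nat.le_add_right _ _)
  have hb_per : HasPeriod (t ++ r) t.length :=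
    (hv_gcd.of_dvd (Nat.gcd_dvd_left _ _)).infix (suffix_append e (t ++ r)).isInfix
  simpa using reverse_drop_eq_of_hasPeriod hb hb_per

theorem reverse_eq_of_append_eq_append {a b u r v : List α} (ha : a.reverse = a)
    (hb : b.reverse = b) (hu : u.reverse = u) (hv : v.reverse = v) (h : u ++ r = a ++ b)
    (hau : a.length < u.length) (hvw : v <:+ a ++ b) (hbv : b.length < v.length) :
    r.reverse = r := by
  obtain ⟨t, rfl, rfl⟩ : ∃ t, u = a ++ t ∧ b = t ++ r := by
    rcases append_eq_append_iff.mp h.symm with h' | ⟨c, rfl, -⟩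
    · exact h'
    · simp at hau
  obtain ⟨s, hs⟩ := hvw
  obtain ⟨e, rfl, rfl⟩ : ∃ e, a = s ++ e ∧ v = e ++ (t ++ r) := by
    rcases append_eq_append_iff.mp hs with h' | ⟨c, -, hc⟩
    · exact h'
    · rw [hc, length_append] at hbv
      omega
  exact reverse_eq_of_overlapping_palindromes ha hb hu hv (length_pos_iff.mp (by simpa using hbv))

theorem exists_longest_palindromic_prefix (w : List α) :
    ∃ u, u <+: w ∧ u.reverse = u ∧
      ∀ x, x <+: w → x.reverse = x → x.length ≤ u.length := by
  classical
  let P (k : ℕ) : Prop := (w.take k).reverse = w.take k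
  have hP0 : P 0 := by simp [P]
  refine ⟨w.take (Nat.findGreatest P w.length), take_prefix _ _,
    Nat.findGreatest_spec (Nat.zero_le _) hP0, fun x hx hxpal => ?_⟩
  rw [length_take, min_eq_left (Nat.findGreatest_le _)]
  refine Nat.le_findGreatest hx.length_le ?_
  change (w.take x.length).reverse = w.take x.length
  rwa [← prefix_iff_eq_take.mp hx]

end List

open List in
theorem stmt_15_general {α : Type*} (w a b : List α)
    (ha : a.reverse = a) (hb : b.reverse = b) (hab : w = a ++ b) :
    ∃ x y : List α, x.reverse = x ∧ y.reverse = y ∧ w = x ++ y ∧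
      ((x <+: w ∧ ∀ x', x' <+: w → x'.reverse = x' → x'.length ≤ x.length) ∨
       (y <:+ w ∧ ∀ y', y' <:+ w → y'.reverse = y' → y'.length ≤ y.length)) := by
  by_cases ha_max : ∀ x', x' <+: w → x'.reverse = x' → x'.length ≤ a.length
  · exact ⟨a, b, ha, hb, hab, Or.inl ⟨hab ▸ prefix_append a b, ha_max⟩⟩
  by_cases hb_max : ∀ y', y' <:+ w → y'.reverse = y' → y'.length ≤ b.length
  · exact ⟨a, b, ha, hb, hab, Or.inr ⟨hab ▸ suffix_append a b, hb_max⟩⟩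
  push Not at ha_max hb_max
  obtain ⟨x', hx', hx'pal, hax'⟩ := ha_max
  obtain ⟨v, hv, hvpal, hbv⟩ := hb_max
  obtain ⟨u, ⟨r, rfl⟩, hupal, hu_max⟩ := exists_longest_palindromic_prefix w
  refine ⟨u, r, hupal, ?_, rfl, Or.inl ⟨prefix_append u r, hu_max⟩⟩
  exact reverse_eq_of_append_eq_append ha hb hupal hvpal hab
    (hax'.trans_le (hu_max x' hx' hx'pal)) (hab ▸ hv) hbv

/-- If a nonempty string `w` is a concatenation of two palindromes, then there exist
palindromes `x`, `y` with `w = xy` such that `x` is the longest palindromic prefix of `w`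
or `y` is the longest palindromic suffix of `w`. -/
theorem stmt_15 {α : Type*} (w a b : List α) (hw : w ≠ [])
    (ha : a.reverse = a) (hb : b.reverse = b) (hab : w = a ++ b) :
    ∃ x y : List α, x.reverse = x ∧ y.reverse = y ∧ w = x ++ y ∧
      ((x <+: w ∧ ∀ x', x' <+: w → x'.reverse = x' → x'.length ≤ x.length) ∨
       (y <:+ w ∧ ∀ y', y' <:+ w → y'.reverse = y' → y'.length ≤ y.length)) :=
  stmt_15_general w a b ha hb hab
end
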